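/- Let τ ⊆ ℕ be an infinite set. Then U_τ(T,E) ∪ {0} contains an 𝔽-vector subspace of H(T,E) that is dense in H(T,E); i.e., there is a dense linear subspace A of H(T,E) with A \ {0} ⊆ U_τ(T,E). -/

import Mathlib

open MeasureTheory Filter Topology

/-- A rooted tree with finite levels `T n`, a singleton root level, a parent map,
and at least two children for every vertex. -/
structure TreeData where
  T : ℕ → Type
  fint : ∀ n, Fintype (T n)
  rootSubsingleton : ∀ x y : T 0, x = y
  rootNonempty : Nonempty (T 0)
  par : ∀ n, T (n + 1) → T n
  twoChildren : ∀ n (x : T n), 2 ≤ Nat.card {y : T (n + 1) // par n y = x}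

instance (D : TreeData) (n : ℕ) : Fintype (D.T n) := D.fint n

noncomputable instance (D : TreeData) (n : ℕ) (x : D.T n) :
    Fintype {y : D.T (n + 1) // D.par n y = x} := by
  classical exact Subtype.fintype _

/-- The set of vertices of the tree. -/
def TreeData.Vert (D : TreeData) : Type := Σ n, D.T n

/-- The boundary `∂T` : infinite geodesics starting at the root. -/
def TreeData.Boundary (D : TreeData) : Type :=
  {e : ∀ n, D.T n // ∀ n, D.par n (e (n + 1)) = e n}

/-- The boundary sector `B_x` of geodesics through `x`. -/
def TreeData.sector (D : TreeData) (n : ℕ) (x : D.T n) : Set D.Boundary :=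
  {e | e.1 n = x}

/-- The σ-algebra `M_m` generated by the sectors at level `m`. -/
def TreeData.levelMS (D : TreeData) (m : ℕ) : MeasurableSpace D.Boundary :=
  MeasurableSpace.generateFrom {s | ∃ x : D.T m, s = D.sector m x}

/-- The σ-algebra `M` generated by all boundary sectors. -/
instance TreeData.boundaryMS (D : TreeData) : MeasurableSpace D.Boundary :=
  MeasurableSpace.generateFrom {s | ∃ n, ∃ x : D.T n, s = D.sector n x}

/-- The probability `∏_{j<n} q(y_j, y_{j+1})` of the path from the root to a vertex. -/
def TreeData.pathProb (D : TreeData) (q : ∀ n, D.T (n + 1) → ℝ) :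
    ∀ n, D.T n → ℝ
  | 0, _ => 1
  | n + 1, y => D.pathProb q n (D.par n y) * q n y

/-- `f : T → E` is generalized harmonic: `f x = ∑_{y ∈ S x} w x y • f y`. -/
def TreeData.Harmonic (D : TreeData) {𝔽 E : Type} [Field 𝔽] [AddCommGroup E]
    [Module 𝔽 E] (w : ∀ n, D.T (n + 1) → 𝔽) (f : D.Vert → E) : Prop :=
  ∀ n (x : D.T n),
    f ⟨n, x⟩ = ∑ y : {y : D.T (n + 1) // D.par n y = x}, w n y.1 • f ⟨n + 1, y.1⟩

/-- The set `H(T,E)` of generalized harmonic functions. -/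
def TreeData.harmonicSet (D : TreeData) {𝔽 : Type} (E : Type) [Field 𝔽] [AddCommGroup E]
    [Module 𝔽 E] (w : ∀ n, D.T (n + 1) → 𝔽) : Set (D.Vert → E) :=
  {f | D.Harmonic w f}

/-- `ω_n(f) : ∂T → E`. -/
def TreeData.omegaMap (D : TreeData) {E : Type} (f : D.Vert → E) (n : ℕ)
    (e : D.Boundary) : E := f ⟨n, e.1 n⟩

/-- The pseudometric of convergence in probability associated to a distance `ρ`. -/
noncomputable def TreeData.dPgen (D : TreeData) (P : Measure D.Boundary) {α : Type}
    (ρ : α → α → ℝ) (h g : D.Boundary → α) : ℝ :=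
  ∫ e, ρ (h e) (g e) / (1 + ρ (h e) (g e)) ∂P

/-- The metric `d_ℙ` of convergence in probability on `L⁰(∂T, E)`. -/
noncomputable def TreeData.dP (D : TreeData) (P : Measure D.Boundary) {E : Type}
    [MetricSpace E] (h g : D.Boundary → E) : ℝ :=
  D.dPgen P dist h g

/-- The translation invariant metric `d̃` on `E ^ ℕ` inducing the product topology. -/
noncomputable def dTilde {E : Type} [MetricSpace E] (x y : ℕ → E) : ℝ :=
  ∑' n : ℕ, (1 / 2 : ℝ) ^ n * (dist (x n) (y n) / (1 + dist (x n) (y n)))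

/-- Lower density of a set of natural numbers. -/
noncomputable def lowerDensity (A : Set ℕ) : ℝ :=
  Filter.liminf (fun N : ℕ => ((A ∩ Set.Iio N).ncard : ℝ) / N) Filter.atTop

/-- Upper density of a set of natural numbers. -/
noncomputable def upperDensity (A : Set ℕ) : ℝ :=
  Filter.limsup (fun N : ℕ => ((A ∩ Set.Iio N).ncard : ℝ) / N) Filter.atTop

/-- `f ∈ U_τ(T,E)` : the family `(ω_n f)_{n ∈ τ}` is dense in `L⁰(∂T,E)`. -/
def TreeData.UnivOn (D : TreeData) (P : Measure D.Boundary) {E : Type}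
    [MetricSpace E] [MeasurableSpace E] (τ : Set ℕ) (f : D.Vert → E) : Prop :=
  ∀ h : D.Boundary → E, Measurable h → ∀ ε > 0, ∃ n ∈ τ, D.dP P (D.omegaMap f n) h < ε

/-- `f ∈ U_FM(T,E)` : for every nonempty open subset `V` of `L⁰(∂T,E)` (equivalently,
every ball) the set `{n | ω_n f ∈ V}` has strictly positive lower density. -/
def TreeData.FreqUniv (D : TreeData) (P : Measure D.Boundary) {E : Type}
    [MetricSpace E] [MeasurableSpace E] (f : D.Vert → E) : Prop :=
  ∀ h : D.Boundary → E, Measurable h → ∀ ε > 0,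
    0 < lowerDensity {n | D.dP P (D.omegaMap f n) h < ε}

/-- `f ∈ U_FM^τ(T,E)` for `τ` enumerated by `ns`. -/
def TreeData.FreqUnivAlong (D : TreeData) (P : Measure D.Boundary) {E : Type}
    [MetricSpace E] [MeasurableSpace E] (ns : ℕ → ℕ) (f : D.Vert → E) : Prop :=
  ∀ h : D.Boundary → E, Measurable h → ∀ ε > 0,
    0 < lowerDensity {k | D.dP P (D.omegaMap f (ns k)) h < ε}

/-- `f ∈ X(T,E)` : for every nonempty open subset `V` of `L⁰(∂T,E)` (equivalently,
every ball) the set `{n | ω_n f ∈ V}` has upper density `1`. -/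
def TreeData.UpperUniv (D : TreeData) (P : Measure D.Boundary) {E : Type}
    [MetricSpace E] [MeasurableSpace E] (f : D.Vert → E) : Prop :=
  ∀ h : D.Boundary → E, Measurable h → ∀ ε > 0,
    upperDensity {n | D.dP P (D.omegaMap f n) h < ε} = 1

/-- `f ∈ U_FM(T, E^ℕ)` where `E^ℕ` carries the metric `d̃`. -/
def TreeData.FreqUnivPi (D : TreeData) (P : Measure D.Boundary) {E : Type}
    [MetricSpace E] [MeasurableSpace E] (f : D.Vert → (ℕ → E)) : Prop :=
  ∀ h : D.Boundary → (ℕ → E), Measurable h → ∀ ε > 0,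
    0 < lowerDensity {n | D.dPgen P dTilde (D.omegaMap f n) h < ε}

variable {𝔽 E : Type} [Field 𝔽] [TopologicalSpace 𝔽] [T2Space 𝔽]
  [TopologicalSpace.SeparableSpace 𝔽] [ContinuousAdd 𝔽] [ContinuousInv₀ 𝔽]
  [AddCommGroup E] [Module 𝔽 E] [MetricSpace E]
  [TopologicalSpace.SeparableSpace E] [ContinuousAdd E] [ContinuousSMul 𝔽 E]
  [MeasurableSpace E] [BorelSpace E]

/-! A harmonic function is determined by its values on any level `b`, and these values can be
chosen freely subject to the linear constraints they impose on a lower level `a`. Since every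
vertex has a child of transition probability at most `1/2`, a prescribed function on level `b`
can be made to meet these constraints by changing it at one descendant of each vertex of
level `a`, i.e. on a set of measure at most `2^{-(b-a)}`.

Fix countable dense sets `sF ⊆ 𝔽`, `sE ⊆ E` and a dense sequence `(u k)` in `H(T,E)`. Along
levels `L 0 < L 1 < ⋯` in `τ` with fast growing gaps, build generators `g j` that agree with
some `u k` up to level `L j` and from then on follow a schedule in which every task
"`g j₀ ≈ a • t` and `g j ≈ 0` for `j ≠ j₀`" (`a ∈ sF`, `t` a level function with values in `sE`)
recurs infinitely often. Then the span of the `g j` is dense, and a combination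
`∑ c j • g j` with `c j₀ ≠ 0` is, at a late stage devoted to a suitable task for `j₀`, equal to
`c j₀ • a • t ≈ t` off a set of small measure. As level functions approximate every
measurable function in probability, such a combination lies in `U_τ(T,E)`. -/

theorem Set.Countable.exists_seq_frequently_eq {α : Type*} [Nonempty α] {s : Set α}
    (hs : s.Countable) : ∃ f : ℕ → α, ∀ a ∈ s, ∃ᶠ n in atTop, f n = a := by
  obtain ⟨φ, hφ⟩ :=
    (hs.insert (Classical.arbitrary α)).exists_eq_range (Set.insert_nonempty _ _)
  refine ⟨fun n => φ n.unpair.1, fun a ha => frequently_atTop.2 fun N => ?_⟩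
  obtain ⟨k, rfl⟩ : a ∈ Set.range φ := hφ ▸ Set.mem_insert_of_mem _ ha
  exact ⟨Nat.pair k N, Nat.right_le_pair k N, by simp⟩

theorem Set.Infinite.exists_seq_mem_gt {τ : Set ℕ} (hτ : τ.Infinite) (bound : ℕ → ℕ → ℕ) :
    ∃ L : ℕ → ℕ, (∀ i, L (i + 1) ∈ τ) ∧ ∀ i, bound i (L i) < L (i + 1) := by
  choose next hnext using fun i l => hτ.exists_gt (bound i l)
  exact ⟨fun i => Nat.rec 0 next i, fun i => (hnext _ _).1, fun i => (hnext _ _).2⟩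

theorem Submodule.exists_eq_sum_range_of_mem_span_range {R M : Type*} [Semiring R]
    [AddCommMonoid M] [Module R M] {g : ℕ → M} {f : M} (hf : f ∈ span R (Set.range g)) :
    ∃ (K : ℕ) (c : ℕ → R), f = ∑ j ∈ Finset.range K, c j • g j := by
  obtain ⟨c, rfl⟩ := Finsupp.mem_span_range_iff_exists_finsupp.1 hf
  refine ⟨c.support.sup id + 1, c, Finsupp.sum_of_support_subset _ (fun j hj => ?_) _ (by simp)⟩
  exact Finset.mem_range.2 (Nat.lt_succ_of_le (Finset.le_sup (f := id) hj))

theorem Dense.exists_mem_forall_dist_smul_smul_lt {𝕜 X ι : Type*} [GroupWithZero 𝕜]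
    [TopologicalSpace 𝕜] [MulAction 𝕜 X] [PseudoMetricSpace X] [ContinuousSMul 𝕜 X] [Finite ι]
    {s : Set 𝕜} (hs : Dense s) {c : 𝕜} (hc : c ≠ 0) (v : ι → X) {δ : ℝ} (hδ : 0 < δ) :
    ∃ a ∈ s, ∀ i, dist (c • a • v i) (v i) < δ := by
  have hopen : IsOpen {a : 𝕜 | ∀ i, dist (c • a • v i) (v i) < δ} := by
    simp only [Set.ofPred_forall]
    exact isOpen_iInter_of_finite fun i => isOpen_lt
      (((continuous_id.smul continuous_const).const_smul c).dist continuous_const)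
      continuous_const
  exact hs.exists_mem_open hopen ⟨c⁻¹, fun i => by simpa [smul_smul, mul_inv_cancel₀ hc]⟩

theorem dist_div_one_add_dist_triangle {X : Type*} [PseudoMetricSpace X] (a b c : X) :
    dist a c / (1 + dist a c) ≤ dist a b / (1 + dist a b) + dist b c / (1 + dist b c) := by
  have hab := dist_nonneg (x := a) (y := b)
  have hbc := dist_nonneg (x := b) (y := c)
  calc dist a c / (1 + dist a c)
      ≤ (dist a b + dist b c) / (1 + (dist a b + dist b c)) := by
        rw [div_le_div_iff₀ (by positivity) (by positivity)]
        nlinarith [dist_triangle a b c, dist_nonneg (x := a) (y := c)]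
    _ = dist a b / (1 + (dist a b + dist b c)) + dist b c / (1 + (dist a b + dist b c)) :=
        add_div _ _ _
    _ ≤ dist a b / (1 + dist a b) + dist b c / (1 + dist b c) := by gcongr <;> linarith

namespace TreeData

section Tree

variable {D : TreeData}

noncomputable def ancestor {m n : ℕ} (h : m ≤ n) : D.T n → D.T m :=
  Nat.leRec (motive := fun n _ => D.T n → D.T m) id (fun k _ f => f ∘ D.par k) h

theorem ancestor_eval (e : D.Boundary) {m n : ℕ} (h : m ≤ n) :
    ancestor h (e.1 n) = e.1 m := by
  induction n, h using Nat.le_induction with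
  | base => simp [ancestor]
  | succ n hmn ih =>
    simp only [ancestor, Nat.leRec_succ _ _ hmn, Function.comp_apply, e.2 n]
    exact ih

theorem pathProb_nonneg {q : ∀ n, D.T (n + 1) → ℝ} (hq : ∀ n y, 0 ≤ q n y) :
    ∀ n (x : D.T n), 0 ≤ D.pathProb q n x
  | 0, _ => zero_le_one
  | n + 1, y => mul_nonneg (pathProb_nonneg hq n _) (hq n y)

theorem sum_pathProb_eq_one {q : ∀ n, D.T (n + 1) → ℝ}
    (hq1 : ∀ n (x : D.T n), ∑ y : {y : D.T (n + 1) // D.par n y = x}, q n y.1 = 1) :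
    ∀ n, ∑ x : D.T n, D.pathProb q n x = 1
  | 0 => by
    have : Unique (D.T 0) :=
      { default := Classical.choice D.rootNonempty, uniq := fun x => D.rootSubsingleton _ _ }
    simp [pathProb]
  | n + 1 => by
    classical
    rw [← Fintype.sum_fiberwise (D.par n), ← sum_pathProb_eq_one hq1 n]
    refine Fintype.sum_congr _ _ fun x => ?_
    have h : ∀ y : {y : D.T (n + 1) // D.par n y = x},
        D.pathProb q (n + 1) y = D.pathProb q n x * q n y := fun y => by
      rw [pathProb, y.2]
    rw [Fintype.sum_congr _ _ h, ← Finset.mul_sum, hq1, mul_one]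

theorem exists_child_le_half {q : ∀ n, D.T (n + 1) → ℝ}
    (hq1 : ∀ n (x : D.T n), ∑ y : {y : D.T (n + 1) // D.par n y = x}, q n y.1 = 1)
    {n : ℕ} (x : D.T n) : ∃ y : D.T (n + 1), D.par n y = x ∧ q n y ≤ 1 / 2 := by
  let C := {y : D.T (n + 1) // D.par n y = x}
  have hcard : 2 ≤ Fintype.card C := Nat.card_eq_fintype_card (α := C) ▸ D.twoChildren n x
  have hne : (Finset.univ : Finset C).Nonempty :=
    Finset.univ_nonempty_iff.2 (Fintype.card_pos_iff.1 (by omega))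
  obtain ⟨y, -, hy⟩ := Finset.exists_le_of_sum_le (f := fun y : C => q n y.1)
    (g := fun _ => 1 / 2) hne (by
      rw [hq1, Finset.sum_const, Finset.card_univ, nsmul_eq_mul]
      have : (2 : ℝ) ≤ Fintype.card C := by exact_mod_cast hcard
      linarith)
  exact ⟨y.1, y.2, hy⟩

theorem measurableSet_preimage_eval {n : ℕ} (S : Set (D.T n)) :
    MeasurableSet ((fun e : D.Boundary => e.1 n) ⁻¹' S) := by
  have : (fun e : D.Boundary => e.1 n) ⁻¹' S = ⋃ x ∈ S, D.sector n x := by ext; simp [sector]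
  rw [this]
  exact .biUnion S.to_countable fun x _ => MeasurableSpace.measurableSet_generateFrom ⟨n, x, rfl⟩

theorem measurable_levelFun {α : Type*} [MeasurableSpace α] {n : ℕ} (t : D.T n → α) :
    Measurable fun e : D.Boundary => t (e.1 n) :=
  fun s _ => measurableSet_preimage_eval (t ⁻¹' s)

theorem measurable_omegaMap {α : Type} [MeasurableSpace α] (f : D.Vert → α) (n : ℕ) :
    Measurable (D.omegaMap f n) :=
  measurable_levelFun fun y => f ⟨n, y⟩

theorem exists_schedule {𝕜 V : Type*} [Nonempty 𝕜] [Nonempty V] {sF : Set 𝕜} {sE : Set V}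
    (hsF : sF.Countable) (hsE : sE.Countable) :
    ∃ tk : ℕ → ℕ × 𝕜 × Σ m, D.T m → V, ∀ (j₀ : ℕ) (a : 𝕜), a ∈ sF → ∀ (m : ℕ)
      (t : D.T m → V), (∀ x, t x ∈ sE) → ∃ᶠ i in atTop, tk i = (j₀, a, ⟨m, t⟩) := by
  have := hsF.to_subtype
  have := hsE.to_subtype
  have : Nonempty (ℕ × 𝕜 × Σ m, D.T m → V) :=
    ⟨(0, Classical.arbitrary 𝕜, ⟨0, fun _ => Classical.arbitrary V⟩)⟩
  have hcount : {p : ℕ × 𝕜 × Σ m, D.T m → V | p.2.1 ∈ sF ∧ ∀ x, p.2.2.2 x ∈ sE}.Countable := by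
    refine (Set.countable_range fun p : ℕ × sF × Σ m, D.T m → sE =>
      (p.1, (p.2.1 : 𝕜), (⟨p.2.2.1, fun x => p.2.2.2 x⟩ : Σ m, D.T m → V))).mono ?_
    rintro ⟨j, a, m, t⟩ ⟨ha, ht⟩
    exact ⟨(j, ⟨a, ha⟩, ⟨m, fun x => ⟨t x, ht x⟩⟩), rfl⟩
  obtain ⟨tk, htk⟩ := hcount.exists_seq_frequently_eq
  exact ⟨tk, fun j₀ a ha m t ht => htk _ ⟨ha, ht⟩⟩

end Tree

section Descend

variable {D : TreeData} {𝕜 V : Type*} [CommSemiring 𝕜] [AddCommMonoid V] [Module 𝕜 V]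

noncomputable def stepDown (w : ∀ n, D.T (n + 1) → 𝕜) (n : ℕ) :
    (D.T (n + 1) → V) →ₗ[𝕜] (D.T n → V) where
  toFun u x := ∑ y : {y : D.T (n + 1) // D.par n y = x}, w n y.1 • u y.1
  map_add' u v := funext fun x => by simp [Finset.sum_add_distrib]
  map_smul' c u := funext fun x => by simp [Finset.smul_sum, smul_comm c]

/-- `descend w h u` is the restriction to level `a` of the harmonic function with values `u`
on level `b`. -/
noncomputable def descend (w : ∀ n, D.T (n + 1) → 𝕜) {a b : ℕ} (h : a ≤ b) :
    (D.T b → V) →ₗ[𝕜] (D.T a → V) :=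
  Nat.leRec (motive := fun b _ => (D.T b → V) →ₗ[𝕜] (D.T a → V)) LinearMap.id
    (fun k _ f => f ∘ₗ stepDown w k) h

variable (w : ∀ n, D.T (n + 1) → 𝕜)

@[simp]
theorem descend_self (a : ℕ) :
    descend (V := V) w le_rfl = LinearMap.id (M := D.T a → V) := by
  simp [descend]

theorem descend_succ {a b : ℕ} (h : a ≤ b) (h' : a ≤ b + 1) (u : D.T (b + 1) → V) :
    descend w h' u = descend w h (stepDown w b u) := by
  simp [descend, Nat.leRec_succ _ _ h]

theorem descend_descend {a b c : ℕ} (hab : a ≤ b) (hbc : b ≤ c) (hac : a ≤ c)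
    (u : D.T c → V) : descend w hab (descend w hbc u) = descend w hac u := by
  induction c, hbc using Nat.le_induction with
  | base => simp
  | succ c hbc ih => rw [descend_succ w hbc, descend_succ w (hab.trans hbc), ih]

theorem descend_eq_stepDown_descend {a b : ℕ} (h : a < b) (u : D.T b → V) :
    descend w h.le u = stepDown w a (descend w h u) := by
  rw [← descend_descend w (Nat.le_succ a) h, descend_succ w le_rfl, descend_self]
  rfl

open scoped Classical in
theorem stepDown_single {n : ℕ} (y : D.T (n + 1)) (c : V) :
    stepDown w n (Pi.single y c) = Pi.single (D.par n y) (w n y • c) := by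
  funext x
  simp only [stepDown, LinearMap.coe_mk, AddHom.coe_mk, Pi.single_apply, smul_ite, smul_zero]
  split_ifs with hx
  · subst hx
    refine (Fintype.sum_eq_single ⟨y, rfl⟩ fun z hz => ?_).trans (if_pos rfl)
    exact if_neg fun h => hz (Subtype.ext h)
  · exact Finset.sum_eq_zero fun z _ => if_neg fun (h : z.1 = y) => hx (h ▸ z.2).symm

end Descend

section Harmonic

variable {D : TreeData} {𝕜 V : Type} [Field 𝕜] [AddCommGroup V] [Module 𝕜 V]
  (w : ∀ n, D.T (n + 1) → 𝕜)

theorem harmonic_iff_stepDown {f : D.Vert → V} :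
    D.Harmonic w f ↔ ∀ n, stepDown w n (fun y => f ⟨n + 1, y⟩) = fun x => f ⟨n, x⟩ :=
  ⟨fun hf n => funext fun x => (hf n x).symm, fun h n x => (congrFun (h n) x).symm⟩

theorem descend_of_harmonic {f : D.Vert → V} (hf : D.Harmonic w f) {a b : ℕ} (h : a ≤ b) :
    descend w h (fun y => f ⟨b, y⟩) = fun x => f ⟨a, x⟩ := by
  induction b, h using Nat.le_induction with
  | base => simp
  | succ b hab ih => rw [descend_succ w hab, (harmonic_iff_stepDown w).1 hf, ih]

def harmonicSubmodule : Submodule 𝕜 (D.Vert → V) where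
  carrier := D.harmonicSet V w
  zero_mem' := (harmonic_iff_stepDown w).2 fun n => map_zero _
  add_mem' {f g} hf hg := (harmonic_iff_stepDown w).2 fun n => by
    have := congrArg₂ (· + ·) ((harmonic_iff_stepDown w).1 hf n)
      ((harmonic_iff_stepDown w).1 hg n)
    rwa [← map_add] at this
  smul_mem' c f hf := (harmonic_iff_stepDown w).2 fun n => by
    have := congrArg (c • ·) ((harmonic_iff_stepDown w).1 hf n)
    rwa [← map_smul] at this

theorem exists_harmonic_of_descend_eq {L : ℕ → ℕ} (hL : StrictMono L)
    (U : ∀ i, D.T (L i) → V) (hU : ∀ i, descend w (hL.monotone i.le_succ) (U (i + 1)) = U i) :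
    ∃ g : D.Vert → V, D.Harmonic w g ∧
      ∀ i n (h : n ≤ L i), (fun x => g ⟨n, x⟩) = descend w h (U i) := by
  have hcoh : ∀ i k (h : i ≤ k), descend w (hL.monotone h) (U k) = U i := by
    intro i k h
    induction k, h using Nat.le_induction with
    | base => simp
    | succ k hik ih =>
      rw [← descend_descend w (hL.monotone hik) (hL.monotone k.le_succ), hU, ih]
  have hagree : ∀ i k n (hi : n ≤ L i) (hk : n ≤ L k),
      descend w hi (U i) = descend w hk (U k) := by
    intro i k n hi hk
    wlog hik : i ≤ k generalizing i k
    · exact (this k i hk hi (le_of_not_ge hik)).symm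
    rw [← hcoh i k hik, descend_descend]
  let g : D.Vert → V := fun v => descend w (hL.le_apply (x := v.1)) (U v.1) v.2
  have hg : ∀ n, (fun x => g ⟨n, x⟩) = descend w hL.le_apply (U n) := fun _ => rfl
  refine ⟨g, (harmonic_iff_stepDown w).2 fun n => ?_,
    fun i n h => (hg n).trans (hagree n i n _ h)⟩
  rw [hg, hg, ← descend_eq_stepDown_descend w (hL.le_apply (x := n + 1)), hagree]

end Harmonic

section Correction

variable {D : TreeData} {𝕜 V : Type} [Field 𝕜] [AddCommGroup V] [Module 𝕜 V]
  (w : ∀ n, D.T (n + 1) → 𝕜) {q : ∀ n, D.T (n + 1) → ℝ}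

open scoped Classical in
theorem exists_descend_single_eq_single (hw : ∀ n y, w n y ≠ 0) (hq : ∀ n y, 0 ≤ q n y)
    (hq1 : ∀ n (x : D.T n), ∑ y : {y : D.T (n + 1) // D.par n y = x}, q n y.1 = 1)
    {a b : ℕ} (h : a ≤ b) (x : D.T a) :
    ∃ (y : D.T b) (W : 𝕜), W ≠ 0 ∧ D.pathProb q b y ≤ D.pathProb q a x * (1 / 2) ^ (b - a) ∧
      ∀ c : V, descend w h (Pi.single y c) = Pi.single x (W • c) := by
  induction b, h using Nat.le_induction with
  | base => exact ⟨x, 1, one_ne_zero, by simp, fun c => by simp⟩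
  | succ b hab ih =>
    obtain ⟨y, W, hW, hy, hdesc⟩ := ih
    obtain ⟨z, hz, hzq⟩ := exists_child_le_half hq1 y
    refine ⟨z, W * w b z, mul_ne_zero hW (hw b z), ?_, fun c => ?_⟩
    · calc D.pathProb q (b + 1) z = D.pathProb q b y * q b z := by rw [pathProb, hz]
        _ ≤ D.pathProb q a x * (1 / 2) ^ (b - a) * (1 / 2) :=
          mul_le_mul hy hzq (hq b z) (by have := pathProb_nonneg hq a x; positivity)
        _ = _ := by rw [Nat.sub_add_comm hab, pow_succ, mul_assoc]
    · rw [descend_succ w hab, stepDown_single, hz, hdesc, mul_smul]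

open scoped Classical in
theorem exists_descend_eq_measureReal_ne_le (hw : ∀ n y, w n y ≠ 0) (hq : ∀ n y, 0 ≤ q n y)
    (hq1 : ∀ n (x : D.T n), ∑ y : {y : D.T (n + 1) // D.par n y = x}, q n y.1 = 1)
    {P : Measure D.Boundary} [IsFiniteMeasure P]
    (hP : ∀ n (x : D.T n), P (D.sector n x) = ENNReal.ofReal (D.pathProb q n x))
    {a b : ℕ} (h : a ≤ b) (A : D.T a → V) (t : D.T b → V) :
    ∃ u : D.T b → V, descend w h u = A ∧
      P.real {e | u (e.1 b) ≠ t (e.1 b)} ≤ (1 / 2) ^ (b - a) := by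
  choose y W hW hy hdesc using fun x => exists_descend_single_eq_single (V := V) w hw hq hq1 h x
  let r := A - descend w h t
  refine ⟨t + ∑ x, Pi.single (y x) ((W x)⁻¹ • r x), ?_, ?_⟩
  · simp only [map_add, map_sum, hdesc, smul_smul, mul_inv_cancel₀ (hW _), one_smul,
      Finset.univ_sum_single, r]
    exact add_sub_cancel _ _
  calc P.real {e | _}
      ≤ P.real (⋃ x ∈ Finset.univ, D.sector b (y x)) := measureReal_mono (fun e he => by
        by_contra hnot
        simp only [Finset.mem_univ, Set.iUnion_true, Set.mem_iUnion, sector,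
          Set.mem_ofPred_eq, not_exists] at hnot
        simp [Finset.sum_apply, Pi.single_apply, hnot] at he) (measure_ne_top P _)
    _ ≤ ∑ x, P.real (D.sector b (y x)) := measureReal_biUnion_finset_le _ _
    _ ≤ ∑ x, D.pathProb q a x * (1 / 2) ^ (b - a) := Finset.sum_le_sum fun x _ => by
        rw [measureReal_def, hP, ENNReal.toReal_ofReal (pathProb_nonneg hq b _)]
        exact hy x
    _ = (1 / 2) ^ (b - a) := by rw [← Finset.sum_mul, sum_pathProb_eq_one hq1, one_mul]

theorem exists_harmonic_eqOn_of_targets (hw : ∀ n y, w n y ≠ 0) (hq : ∀ n y, 0 ≤ q n y)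
    (hq1 : ∀ n (x : D.T n), ∑ y : {y : D.T (n + 1) // D.par n y = x}, q n y.1 = 1)
    {P : Measure D.Boundary} [IsFiniteMeasure P]
    (hP : ∀ n (x : D.T n), P (D.sector n x) = ENNReal.ofReal (D.pathProb q n x))
    {f : D.Vert → V} (hf : D.Harmonic w f) {L : ℕ → ℕ} (hL : StrictMono L) (j : ℕ)
    (F : ℕ → D.Boundary → V)
    (hF : ∀ i, ∃ t : D.T (L (i + 1)) → V, ∀ e, F i e = t (e.1 (L (i + 1)))) :
    ∃ g : D.Vert → V, D.Harmonic w g ∧ (∀ n ≤ L j, ∀ x, g ⟨n, x⟩ = f ⟨n, x⟩) ∧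
      ∀ i, j ≤ i → P.real {e | g ⟨L (i + 1), e.1 (L (i + 1))⟩ ≠ F i e} ≤
        (1 / 2) ^ (L (i + 1) - L i) := by
  choose t ht using hF
  choose u hu hu_bad using fun i (A : D.T (L i) → V) =>
    exists_descend_eq_measureReal_ne_le w hw hq hq1 hP (hL.monotone i.le_succ) A (t i)
  let U : ∀ i, D.T (L i) → V := fun i => Nat.rec (motive := fun i => D.T (L i) → V)
    (fun x => f ⟨L 0, x⟩) (fun i Ui => if j ≤ i then u i Ui else fun x => f ⟨L (i + 1), x⟩) i
  have hU_le : ∀ i ≤ j, U i = fun x => f ⟨L i, x⟩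
    | 0, _ => rfl
    | i + 1, hi => if_neg (by omega)
  have hU_succ : ∀ i, j ≤ i → U (i + 1) = u i (U i) := fun i hi => if_pos hi
  obtain ⟨g, hg, hgU⟩ := exists_harmonic_of_descend_eq w hL U fun i => by
    by_cases hi : j ≤ i
    · rw [hU_succ i hi, hu]
    · rw [hU_le i (by omega), hU_le (i + 1) (by omega), descend_of_harmonic w hf]
  refine ⟨g, hg, fun n hn x => ?_, fun i hi => ?_⟩
  · rw [congrFun (hgU j n hn) x, hU_le j le_rfl, descend_of_harmonic w hf]
  · have hg_eq : ∀ y, g ⟨L (i + 1), y⟩ = u i (U i) y := fun y => by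
      rw [congrFun (hgU (i + 1) _ le_rfl) y, descend_self, hU_succ i hi]
      rfl
    simpa only [hg_eq, ht] using hu_bad i (U i)

theorem exists_generators (hw : ∀ n y, w n y ≠ 0) (hq : ∀ n y, 0 ≤ q n y)
    (hq1 : ∀ n (x : D.T n), ∑ y : {y : D.T (n + 1) // D.par n y = x}, q n y.1 = 1)
    {P : Measure D.Boundary} [IsFiniteMeasure P]
    (hP : ∀ n (x : D.T n), P (D.sector n x) = ENNReal.ofReal (D.pathProb q n x))
    {τ : Set ℕ} (hτ : τ.Infinite) {sF : Set 𝕜} {sE : Set V} (hsF : sF.Countable)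
    (hsE : sE.Countable) (u : ℕ → D.Vert → V) (hu : ∀ k, D.Harmonic w (u k)) :
    ∃ g : ℕ → D.Vert → V, (∀ j, D.Harmonic w (g j)) ∧
      (∀ k n, ∃ j, ∀ m ≤ n, ∀ x, g j ⟨m, x⟩ = u k ⟨m, x⟩) ∧
      ∀ (j₀ K : ℕ) (a : 𝕜), a ∈ sF → ∀ (m : ℕ) (t : D.T m → V), (∀ x, t x ∈ sE) →
        ∀ δ > 0, ∃ N ∈ τ,
          P.real {e | ∃ j < K, g j ⟨N, e.1 N⟩ ≠ if j = j₀ then a • t (e.1 m) else 0} < δ := by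
  classical
  obtain ⟨tk, htk⟩ := exists_schedule (D := D) hsF hsE
  -- at stage `i` the task `tk i = (j₀, a, ⟨m, t⟩)` asks `g j₀` to look like `a • t` and the
  -- other generators like `0`; `g j` copies `u j.unpair.1` up to level `L j ≥ j.unpair.2` and
  -- follows the schedule from stage `j` on
  let F : ℕ → ℕ → D.Boundary → V := fun j i e =>
    if j = (tk i).1 then (tk i).2.1 • (tk i).2.2.2 (e.1 (tk i).2.2.1) else 0
  obtain ⟨L, hLτ, hL⟩ := hτ.exists_seq_mem_gt fun i l => max (l + i) (tk i).2.2.1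
  have hLmono : StrictMono L := strictMono_nat_of_lt_succ fun i =>
    ((Nat.le_add_right _ i).trans (le_max_left _ _)).trans_lt (hL i)
  have hF : ∀ j i, ∃ t : D.T (L (i + 1)) → V, ∀ e, F j i e = t (e.1 (L (i + 1))) := fun j i =>
    have hm : (tk i).2.2.1 ≤ L (i + 1) := (le_max_right _ _).trans (hL i).le
    ⟨fun y => if j = (tk i).1 then (tk i).2.1 • (tk i).2.2.2 (ancestor hm y) else 0,
      fun e => by simp only [F, ancestor_eval]⟩
  choose g hg hgu hgF using fun j =>
    exists_harmonic_eqOn_of_targets w hw hq hq1 hP (hu j.unpair.1) hLmono j (F j) (hF j)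
  refine ⟨g, hg, fun k n => ⟨Nat.pair k n, fun m hm x => ?_⟩, ?_⟩
  · rw [hgu _ m (hm.trans ((Nat.right_le_pair k n).trans hLmono.le_apply)) x, Nat.unpair_pair]
  intro j₀ K a ha m t ht δ hδ
  have hsmall : ∀ᶠ i in atTop, K ≤ i ∧ K * (1 / 2 : ℝ) ^ (i + 1) < δ := by
    refine (eventually_ge_atTop K).and (Tendsto.eventually ?_ (gt_mem_nhds hδ))
    simpa using ((tendsto_pow_atTop_nhds_zero_of_lt_one (r := (1 / 2 : ℝ)) (by norm_num)
      (by norm_num)).comp (tendsto_add_atTop_nat 1)).const_mul (K : ℝ)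
  obtain ⟨i, hi, hKi, hKδ⟩ := ((htk j₀ a ha m t ht).and_eventually hsmall).exists
  have hFi : ∀ j e, F j i e = if j = j₀ then a • t (e.1 m) else 0 := fun j e => by
    simp only [F]
    rw [hi]
  refine ⟨L (i + 1), hLτ i, ?_⟩
  calc P.real {e | ∃ j < K, g j ⟨L (i + 1), e.1 (L (i + 1))⟩ ≠ if j = j₀ then a • t (e.1 m) else 0}
      ≤ P.real (⋃ j ∈ Finset.range K, {e | g j ⟨L (i + 1), e.1 (L (i + 1))⟩ ≠ F j i e}) :=
        measureReal_mono (fun e ⟨j, hj, hne⟩ => by simpa [hFi] using ⟨j, hj, hne⟩)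
          (measure_ne_top P _)
    _ ≤ ∑ j ∈ Finset.range K, P.real {e | g j ⟨L (i + 1), e.1 (L (i + 1))⟩ ≠ F j i e} :=
        measureReal_biUnion_finset_le _ _
    _ ≤ ∑ j ∈ Finset.range K, (1 / 2 : ℝ) ^ (i + 1) := Finset.sum_le_sum fun j hj =>
        (hgF j i (by simp at hj; omega)).trans
          (pow_le_pow_of_le_one (by norm_num) (by norm_num) (by have := hL i; omega))
    _ < δ := by simpa using hKδ

end Correction

section ConvergenceInProbability

variable {D : TreeData} {X : Type} [MetricSpace X] (P : Measure D.Boundary)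

theorem dP_le_of_forall_dist_le [IsProbabilityMeasure P] {f g : D.Boundary → X} {δ : ℝ}
    (h : ∀ e, dist (f e) (g e) ≤ δ) : D.dP P f g ≤ δ := by
  have hδ : 0 ≤ δ := dist_nonneg.trans (h (nonempty_of_isProbabilityMeasure P).some)
  refine (integral_mono_of_nonneg (.of_forall fun e => by positivity) (integrable_const δ)
    (.of_forall fun e => ?_)).trans_eq (by simp)
  exact (div_le_self dist_nonneg (by linarith [dist_nonneg (x := f e) (y := g e)])).trans (h e)

variable [IsFiniteMeasure P] [MeasurableSpace X] [OpensMeasurableSpace X]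
  [SecondCountableTopology X]

theorem integrable_dist_div_one_add_dist {f g : D.Boundary → X} (hf : Measurable f)
    (hg : Measurable g) : Integrable (fun e => dist (f e) (g e) / (1 + dist (f e) (g e))) P := by
  refine .mono' (integrable_const 1)
    ((hf.dist hg).div (measurable_const.add (hf.dist hg))).aestronglyMeasurable
    (.of_forall fun e => ?_)
  rw [Real.norm_of_nonneg (by positivity)]
  exact div_le_one_of_le₀ (by linarith) (by positivity)

theorem dP_le_measureReal_ne {f g : D.Boundary → X} (hf : Measurable f) (hg : Measurable g) :
    D.dP P f g ≤ P.real {e | f e ≠ g e} := by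
  have hS : MeasurableSet {e | f e ≠ g e} := (measurableSet_eq_fun hf hg).compl
  refine (integral_mono_of_nonneg (.of_forall fun e => by positivity)
    ((integrable_const (1 : ℝ)).indicator hS) (.of_forall fun e => ?_)).trans_eq (by simp [hS])
  by_cases he : f e = g e
  · simp [he]
  · rw [Set.indicator_of_mem (show e ∈ {e | f e ≠ g e} from he)]
    exact div_le_one_of_le₀ (by linarith) (by positivity)

theorem dP_triangle {f g h : D.Boundary → X} (hf : Measurable f) (hg : Measurable g)
    (hh : Measurable h) : D.dP P f h ≤ D.dP P f g + D.dP P g h := by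
  have hfg := integrable_dist_div_one_add_dist P hf hg
  have hgh := integrable_dist_div_one_add_dist P hg hh
  rw [dP, dPgen, dP, dPgen, dP, dPgen, ← integral_add hfg hgh]
  exact integral_mono_of_nonneg (.of_forall fun e => by positivity) (hfg.add hgh)
    (.of_forall fun e => dist_div_one_add_dist_triangle _ _ _)

theorem tendsto_dP_of_tendsto {F : ℕ → D.Boundary → X} {h : D.Boundary → X}
    (hF : ∀ k, Measurable (F k)) (hh : Measurable h)
    (hlim : ∀ e, Tendsto (fun k => F k e) atTop (𝓝 (h e))) :
    Tendsto (fun k => D.dP P (F k) h) atTop (𝓝 0) := by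
  have := tendsto_integral_of_dominated_convergence (μ := P) (fun _ => (1 : ℝ))
    (fun k => (integrable_dist_div_one_add_dist P (hF k) hh).aestronglyMeasurable)
    (integrable_const 1) (fun k => .of_forall fun e => by
      rw [Real.norm_of_nonneg (by positivity)]
      exact div_le_one_of_le₀ (by linarith) (by positivity))
    (.of_forall fun e => by
      have hd := tendsto_iff_dist_tendsto_zero.1 (hlim e)
      simpa [Pi.div_def] using hd.div (tendsto_const_nhds.add hd) (by norm_num))
  simpa [dP, dPgen] using this

end ConvergenceInProbability

section LevelApproximation

open scoped ENNReal symmDiff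

variable {D : TreeData}

theorem preimage_eval_eq_preimage_ancestor {m n : ℕ} (h : m ≤ n) (S : Set (D.T m)) :
    (fun e : D.Boundary => e.1 m) ⁻¹' S = (fun e => e.1 n) ⁻¹' (ancestor h ⁻¹' S) := by
  ext e
  simp [ancestor_eval]

theorem eventually_exists_preimage_eval_symmDiff_lt (P : Measure D.Boundary)
    [IsFiniteMeasure P] {s : Set D.Boundary} (hs : MeasurableSet s) {ε : ℝ≥0∞} (hε : 0 < ε) :
    ∀ᶠ n in atTop, ∃ S : Set (D.T n), P (((fun e => e.1 n) ⁻¹' S) ∆ s) < ε := by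
  let C : Set (Set D.Boundary) := {s | ∃ n, ∃ S : Set (D.T n), s = (fun e => e.1 n) ⁻¹' S}
  have hcommon : ∀ {s t}, s ∈ C → t ∈ C → ∃ n, ∃ S S' : Set (D.T n),
      s = (fun e => e.1 n) ⁻¹' S ∧ t = (fun e => e.1 n) ⁻¹' S' := by
    rintro _ _ ⟨m, S, rfl⟩ ⟨m', S', rfl⟩
    exact ⟨max m m', _, _, preimage_eval_eq_preimage_ancestor (le_max_left m m') S,
      preimage_eval_eq_preimage_ancestor (le_max_right m m') S'⟩
  have hC : IsSetRing C :=
    { empty_mem := ⟨0, ∅, rfl⟩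
      union_mem := fun s t hs ht => by
        obtain ⟨n, S, S', rfl, rfl⟩ := hcommon hs ht
        exact ⟨n, S ∪ S', rfl⟩
      sdiff_mem := fun s t hs ht => by
        obtain ⟨n, S, S', rfl, rfl⟩ := hcommon hs ht
        exact ⟨n, S \ S', rfl⟩ }
  have hgen : D.boundaryMS = MeasurableSpace.generateFrom C := by
    refine le_antisymm (MeasurableSpace.generateFrom_mono ?_) (MeasurableSpace.generateFrom_le ?_)
    · rintro _ ⟨n, x, rfl⟩
      exact ⟨n, {x}, rfl⟩
    · rintro _ ⟨n, S, rfl⟩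
      exact measurableSet_preimage_eval S
  obtain ⟨_, ⟨m, S, rfl⟩, hS⟩ := exists_measure_symmDiff_lt_of_generateFrom_isSetRing (μ := P)
    hC ⟨{Set.univ}, Set.countable_singleton _, by simpa using ⟨0, Set.univ, rfl⟩, by simp⟩
    hgen hs hε
  exact eventually_atTop.2 ⟨m, fun n hn => ⟨_, preimage_eval_eq_preimage_ancestor hn S ▸ hS⟩⟩

variable (P : Measure D.Boundary) [IsProbabilityMeasure P]

theorem exists_levelFun_measureReal_ne_lt {Y : Type*} (φ : SimpleFunc D.Boundary Y) {δ : ℝ}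
    (hδ : 0 < δ) : ∃ n, ∃ t : D.T n → Y, P.real {e | t (e.1 n) ≠ φ e} < δ := by
  classical
  have hR : φ.range.Nonempty := ⟨_, φ.mem_range_self (nonempty_of_isProbabilityMeasure P).some⟩
  have hδR : 0 < δ / φ.range.card := div_pos hδ (by exact_mod_cast hR.card_pos)
  obtain ⟨n, hn⟩ := ((eventually_all_finset φ.range).2 fun v _ =>
    eventually_exists_preimage_eval_symmDiff_lt P (φ.measurableSet_fiber v)
      (ENNReal.ofReal_pos.2 hδR)).exists
  choose! S hS using hn
  -- away from the symmetric differences, `e.1 n ∈ S v` holds exactly for `v = φ e`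
  let t : D.T n → Y := fun y => if h : ∃ v ∈ φ.range, y ∈ S v then h.choose else hR.choose
  refine ⟨n, t, ?_⟩
  calc P.real {e | t (e.1 n) ≠ φ e}
      ≤ P.real (⋃ v ∈ φ.range, ((fun e => e.1 n) ⁻¹' S v) ∆ (φ ⁻¹' {v})) := by
        refine measureReal_mono (fun e he => ?_) (measure_ne_top P _)
        by_contra hgood
        simp only [Set.mem_iUnion, not_exists] at hgood
        have hS_iff : ∀ v ∈ φ.range, (e.1 n ∈ S v ↔ φ e = v) := fun v hv => by
          have := hgood v hv
          simp only [Set.mem_symmDiff, Set.mem_preimage, Set.mem_singleton_iff] at this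
          tauto
        have hex : ∃ v ∈ φ.range, e.1 n ∈ S v :=
          ⟨φ e, φ.mem_range_self e, (hS_iff _ (φ.mem_range_self e)).2 rfl⟩
        refine he ?_
        simp only [t, dif_pos hex]
        exact ((hS_iff _ hex.choose_spec.1).1 hex.choose_spec.2).symm
    _ ≤ ∑ v ∈ φ.range, P.real (((fun e => e.1 n) ⁻¹' S v) ∆ (φ ⁻¹' {v})) :=
        measureReal_biUnion_finset_le _ _
    _ < ∑ v ∈ φ.range, δ / φ.range.card :=
        Finset.sum_lt_sum_of_nonempty hR fun v hv => ENNReal.toReal_lt_of_lt_ofReal (hS v hv)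
    _ = δ := by
        rw [Finset.sum_const, nsmul_eq_mul]
        field_simp

variable {X : Type} [MetricSpace X] [MeasurableSpace X] [OpensMeasurableSpace X]
  [SecondCountableTopology X]

theorem exists_dP_levelFun_lt {h : D.Boundary → X} (hh : Measurable h) {ε : ℝ} (hε : 0 < ε) :
    ∃ n, ∃ t : D.T n → X, D.dP P (fun e => t (e.1 n)) h < ε := by
  have hsm := hh.stronglyMeasurable
  obtain ⟨k, hk⟩ := ((tendsto_dP_of_tendsto P (fun k => (hsm.approx k).measurable) hh
    hsm.tendsto_approx).eventually (gt_mem_nhds (half_pos hε))).exists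
  obtain ⟨n, t, ht⟩ := exists_levelFun_measureReal_ne_lt P (hsm.approx k) (half_pos hε)
  refine ⟨n, t, ?_⟩
  calc D.dP P (fun e => t (e.1 n)) h
      ≤ D.dP P (fun e => t (e.1 n)) (hsm.approx k) + D.dP P (hsm.approx k) h :=
        dP_triangle P (measurable_levelFun t) (hsm.approx k).measurable hh
    _ < ε / 2 + ε / 2 := add_lt_add
        ((dP_le_measureReal_ne P (measurable_levelFun t) (hsm.approx k).measurable).trans_lt ht)
        hk
    _ = ε := add_halves ε

end LevelApproximation

section Universality

variable {D : TreeData}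

theorem dense_of_forall_exists_eq_le {X : Type} [TopologicalSpace X] {s : Set (D.Vert → X)}
    {S : Set s} {u : ℕ → s} (hu : DenseRange u)
    (h : ∀ k n, ∃ g ∈ S, ∀ m ≤ n, ∀ x, (g : D.Vert → X) ⟨m, x⟩ = (u k : D.Vert → X) ⟨m, x⟩) :
    Dense S := by
  refine dense_closure.1 (Dense.mono (Set.range_subset_iff.2 fun k => ?_) hu)
  choose g hgS hg using h k
  refine mem_closure_of_tendsto (b := atTop) (tendsto_subtype_rng.2 (tendsto_pi_nhds.2 fun v =>
    tendsto_const_nhds.congr' ?_)) (.of_forall hgS)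
  filter_upwards [eventually_ge_atTop v.1] with n hn
  exact (hg n v.1 hn v.2).symm

variable {𝕜 X : Type} [Field 𝕜] [TopologicalSpace 𝕜] [AddCommGroup X] [Module 𝕜 X]
  [MetricSpace X] [ContinuousSMul 𝕜 X] [MeasurableSpace X] [OpensMeasurableSpace X]
  [SecondCountableTopology X]

theorem univOn_of_mem_span (P : Measure D.Boundary) [IsProbabilityMeasure P] {τ : Set ℕ}
    {sF : Set 𝕜} {sE : Set X} (hsF : Dense sF) (hsE : Dense sE) {g : ℕ → D.Vert → X}
    (hg : ∀ (j₀ K : ℕ) (a : 𝕜), a ∈ sF → ∀ (m : ℕ) (t : D.T m → X), (∀ x, t x ∈ sE) →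
      ∀ δ > 0, ∃ N ∈ τ,
        P.real {e | ∃ j < K, g j ⟨N, e.1 N⟩ ≠ if j = j₀ then a • t (e.1 m) else 0} < δ)
    {f : D.Vert → X} (hf : f ∈ Submodule.span 𝕜 (Set.range g)) (hf0 : f ≠ 0) :
    D.UnivOn P τ f := by
  obtain ⟨K, c, hfc⟩ := Submodule.exists_eq_sum_range_of_mem_span_range hf
  obtain ⟨j₀, hj₀, hc⟩ : ∃ j₀ < K, c j₀ ≠ 0 := by
    by_contra! h
    exact hf0 (hfc.trans (Finset.sum_eq_zero fun j hj => by
      rw [h j (Finset.mem_range.1 hj), zero_smul]))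
  intro h hh ε hε
  have hε4 : 0 < ε / 4 := by positivity
  obtain ⟨m, t₀, ht₀⟩ := exists_dP_levelFun_lt P hh hε4
  choose t htE ht using fun x => hsE.exists_dist_lt (t₀ x) hε4
  obtain ⟨a, ha, hat⟩ := hsF.exists_mem_forall_dist_smul_smul_lt hc t hε4
  obtain ⟨N, hN, hbad⟩ := hg j₀ K a ha m t htE (ε / 4) hε4
  refine ⟨N, hN, ?_⟩
  have h₁ : D.dP P (D.omegaMap f N) (fun e => c j₀ • a • t (e.1 m)) ≤ ε / 4 := by
    refine (dP_le_measureReal_ne P (measurable_omegaMap _ _)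
      (measurable_levelFun (fun y => c j₀ • a • t y))).trans
      ((measureReal_mono (fun e he => ?_) (measure_ne_top P _)).trans hbad.le)
    by_contra hgood
    simp only [Set.mem_ofPred_eq, not_exists, not_and, not_not] at hgood
    apply he
    calc f ⟨N, e.1 N⟩
        = ∑ j ∈ Finset.range K, c j • (if j = j₀ then a • t (e.1 m) else 0) :=
          (congrFun hfc _).trans <| (Finset.sum_apply _ _ _).trans (Finset.sum_congr rfl
            fun j hj => congrArg (c j • ·) (hgood j (Finset.mem_range.1 hj)))
      _ = c j₀ • a • t (e.1 m) := by simp [smul_ite, hj₀]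
  have h₂ : D.dP P (fun e => c j₀ • a • t (e.1 m)) (fun e => t (e.1 m)) ≤ ε / 4 :=
    dP_le_of_forall_dist_le P fun e => (hat _).le
  have h₃ : D.dP P (fun e => t (e.1 m)) (fun e => t₀ (e.1 m)) ≤ ε / 4 :=
    dP_le_of_forall_dist_le P fun e => (dist_comm (t₀ _) _ ▸ ht _).le
  have := dP_triangle P (measurable_omegaMap f N)
    (measurable_levelFun (fun y => c j₀ • a • t y)) hh
  have := dP_triangle P (measurable_levelFun (fun y => c j₀ • a • t y)) (measurable_levelFun t) hh
  have := dP_triangle P (measurable_levelFun t) (measurable_levelFun t₀) hh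
  linarith

end Universality

end TreeData

theorem universality_algebraic_genericity_general (D : TreeData)
    (w : ∀ n, D.T (n + 1) → 𝔽) (hw : ∀ n y, w n y ≠ 0)
    (q : ∀ n, D.T (n + 1) → ℝ) (hq0 : ∀ n y, 0 < q n y)
    (hq1 : ∀ n (x : D.T n), ∑ y : {y : D.T (n + 1) // D.par n y = x}, q n y.1 = 1)
    (P : Measure D.Boundary) [IsProbabilityMeasure P]
    (hP : ∀ n (x : D.T n), P (D.sector n x) = ENNReal.ofReal (D.pathProb q n x))
    (τ : Set ℕ) (hτ : τ.Infinite) :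
    ∃ A : Submodule 𝔽 (D.Vert → E),
      (A : Set (D.Vert → E)) ⊆ D.harmonicSet E w ∧
      Dense {f : ↥(D.harmonicSet E w) | f.1 ∈ A} ∧
      ∀ f ∈ A, f ≠ 0 → D.UnivOn P τ f := by
  have : SecondCountableTopology E := UniformSpace.secondCountable_of_separable E
  have : Countable D.Vert := inferInstanceAs (Countable (Σ n, D.T n))
  have : Nonempty (D.harmonicSet E w) := ⟨⟨0, (TreeData.harmonicSubmodule w).zero_mem⟩⟩
  obtain ⟨sF, hsFc, hsF⟩ := TopologicalSpace.exists_countable_dense 𝔽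
  obtain ⟨sE, hsEc, hsE⟩ := TopologicalSpace.exists_countable_dense E
  obtain ⟨u, hu⟩ := TopologicalSpace.exists_dense_seq (D.harmonicSet E w)
  obtain ⟨g, hg, hgu, hgτ⟩ := TreeData.exists_generators w hw (fun n y => (hq0 n y).le) hq1 hP
    hτ hsFc hsEc (fun k => u k) fun k => (u k).2
  refine ⟨Submodule.span 𝔽 (Set.range g),
    Submodule.span_le (p := TreeData.harmonicSubmodule w).2 (Set.range_subset_iff.2 hg),
    TreeData.dense_of_forall_exists_eq_le hu fun k n => ?_,
    fun f hf hf0 => TreeData.univOn_of_mem_span P hsF hsE hgτ hf hf0⟩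
  obtain ⟨j, hj⟩ := hgu k n
  exact ⟨⟨g j, hg j⟩, Submodule.subset_span ⟨j, rfl⟩, hj⟩

/-- For any infinite τ ⊆ ℕ, U_τ(T,E) ∪ {0} contains an 𝔽-vector
subspace of H(T,E) that is dense in H(T,E). -/
theorem universality_algebraic_genericity (D : TreeData)
    (w : ∀ n, D.T (n + 1) → 𝔽) (hw : ∀ n y, w n y ≠ 0)
    (hdist : ∀ a x y : E, dist (a + x) (a + y) = dist x y)
    (q : ∀ n, D.T (n + 1) → ℝ) (hq0 : ∀ n y, 0 < q n y)
    (hq1 : ∀ n (x : D.T n), ∑ y : {y : D.T (n + 1) // D.par n y = x}, q n y.1 = 1)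
    (P : Measure D.Boundary) [IsProbabilityMeasure P]
    (hP : ∀ n (x : D.T n), P (D.sector n x) = ENNReal.ofReal (D.pathProb q n x))
    (τ : Set ℕ) (hτ : τ.Infinite) :
    ∃ A : Submodule 𝔽 (D.Vert → E),
      (A : Set (D.Vert → E)) ⊆ D.harmonicSet E w ∧
      Dense {f : ↥(D.harmonicSet E w) | f.1 ∈ A} ∧
      ∀ f ∈ A, f ≠ 0 → D.UnivOn P τ f :=
  universality_algebraic_genericity_general D w hw q hq0 hq1 P hP τ hτ
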